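/- Let Φ ∈ ℝ^{N×m} have orthonormal columns, let S ∈ ℝ^{N×r} be a selection matrix with r < m, suppose Θ := SᵀΦ has full row rank, and let Θ⁺ = Θᵀ(ΘΘᵀ)⁻¹. Then the Q-DEIM estimate ũ(0) = ΦΘ⁺Sᵀu satisfies the error bound |ũ(0) − u| ≤ ‖Θ⁺‖₂ |u| for every u ∈ ℝ^N; equivalently, for u ≠ 0, the relative error |ũ(0) − u|/|u| is at most ‖Θ⁺‖₂. -/
import Mathlib


open Matrix BigOperators

/-- Euclidean norm of a vector in `ℝ^n`. -/
noncomputable def eNorm {n : ℕ} (x : Fin n → ℝ) : ℝ := Real.sqrt (∑ i, x i ^ 2)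

/-- Spectral norm of a matrix: the maximum of `|Ax|` over unit vectors `x` (realized as a
supremum, which is attained since the unit sphere is compact). -/
noncomputable def specNorm {n m : ℕ} (A : Matrix (Fin n) (Fin m) ℝ) : ℝ :=
  sSup ((fun x => eNorm (A.mulVec x)) '' {x : Fin m → ℝ | eNorm x = 1})

lemma eNorm_eq_sqrt_dot {n : ℕ} (x : Fin n → ℝ) : eNorm x = Real.sqrt (x ⬝ᵥ x) := by
  unfold eNorm; congr 1; simp [dotProduct, sq]

lemma dot_self_nonneg {n : ℕ} (x : Fin n → ℝ) : 0 ≤ x ⬝ᵥ x :=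
  Finset.sum_nonneg fun i _ => mul_self_nonneg _

lemma eNorm_nonneg {n : ℕ} (x : Fin n → ℝ) : 0 ≤ eNorm x := Real.sqrt_nonneg _

lemma sq_eNorm {n : ℕ} (x : Fin n → ℝ) : eNorm x ^ 2 = x ⬝ᵥ x := by
  rw [eNorm_eq_sqrt_dot, Real.sq_sqrt (dot_self_nonneg x)]

lemma eNorm_smul {n : ℕ} (k : ℝ) (x : Fin n → ℝ) : eNorm (k • x) = |k| * eNorm x := by
  rw [eNorm_eq_sqrt_dot, eNorm_eq_sqrt_dot]
  have h : (k • x) ⬝ᵥ (k • x) = k ^ 2 * (x ⬝ᵥ x) := by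
    rw [smul_dotProduct, dotProduct_smul, smul_eq_mul, smul_eq_mul]; ring
  rw [h, Real.sqrt_mul (sq_nonneg k), Real.sqrt_sq_eq_abs]

lemma dot_mm {n p q : ℕ} (A : Matrix (Fin n) (Fin p) ℝ) (B : Matrix (Fin n) (Fin q) ℝ)
    (a : Fin p → ℝ) (b : Fin q → ℝ) :
    (A.mulVec a) ⬝ᵥ (B.mulVec b) = a ⬝ᵥ ((Aᵀ * B).mulVec b) := by
  rw [Matrix.dotProduct_mulVec, ← Matrix.vecMul_transpose, Matrix.vecMul_vecMul,
    ← Matrix.dotProduct_mulVec]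

lemma eNorm_mulVec_le {n p : ℕ} (A : Matrix (Fin n) (Fin p) ℝ) (x : Fin p → ℝ) :
    eNorm (A.mulVec x) ≤ specNorm A * eNorm x := by
  have hbdd : BddAbove ((fun x => eNorm (A.mulVec x)) '' {x : Fin p → ℝ | eNorm x = 1}) := by
    refine ⟨Real.sqrt (∑ i, ∑ j, A i j ^ 2), ?_⟩
    rintro y ⟨v, hv, rfl⟩
    have hv1 : ∑ j, v j ^ 2 = 1 := by
      have := hv
      simp only [Set.mem_setOf_eq] at this
      have h2 : Real.sqrt (∑ j, v j ^ 2) = 1 := this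
      have h3 := Real.sq_sqrt (Finset.sum_nonneg (s := Finset.univ)
        (fun j _ => sq_nonneg (v j)))
      nlinarith [Real.sqrt_nonneg (∑ j, v j ^ 2)]
    unfold eNorm
    apply Real.sqrt_le_sqrt
    calc ∑ i, (A.mulVec v) i ^ 2
        ≤ ∑ i, (∑ j, A i j ^ 2) * (∑ j, v j ^ 2) := by
          apply Finset.sum_le_sum
          intro i _
          simpa [Matrix.mulVec, dotProduct] using
            Finset.sum_mul_sq_le_sq_mul_sq Finset.univ (fun j => A i j) v
      _ = ∑ i, ∑ j, A i j ^ 2 := by simp [hv1]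
  rcases eq_or_ne x 0 with rfl | hx
  · simp [eNorm, Matrix.mulVec_zero]
  · have hxpos : 0 < eNorm x := by
      rw [eNorm_eq_sqrt_dot]
      apply Real.sqrt_pos.2
      rcases (dot_self_nonneg x).lt_or_eq with h | h
      · exact h
      · exact absurd (dotProduct_self_eq_zero.1 h.symm) hx
    have hy : eNorm ((eNorm x)⁻¹ • x) = 1 := by
      rw [eNorm_smul, abs_of_pos (inv_pos.2 hxpos), inv_mul_cancel₀ hxpos.ne']
    have hmem : eNorm (A.mulVec ((eNorm x)⁻¹ • x)) ∈
        ((fun x => eNorm (A.mulVec x)) '' {x : Fin p → ℝ | eNorm x = 1}) :=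
      ⟨_, hy, rfl⟩
    have hle := le_csSup hbdd hmem
    rw [Matrix.mulVec_smul, eNorm_smul, abs_of_pos (inv_pos.2 hxpos)] at hle
    calc eNorm (A.mulVec x) = (eNorm x) * ((eNorm x)⁻¹ * eNorm (A.mulVec x)) := by
          field_simp
      _ ≤ eNorm x * specNorm A := by
          exact mul_le_mul_of_nonneg_left hle hxpos.le
      _ = specNorm A * eNorm x := mul_comm _ _
lemma eNorm_pos {n : ℕ} {x : Fin n → ℝ} (hx : x ≠ 0) : 0 < eNorm x := by
  rw [eNorm_eq_sqrt_dot]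
  apply Real.sqrt_pos.2
  rcases (dot_self_nonneg x).lt_or_eq with h | h
  · exact h
  · exact absurd (dotProduct_self_eq_zero.1 h.symm) hx

set_option maxHeartbeats 2000000 in
/-- Let `Φ ∈ ℝ^{N×m}` have orthonormal columns, `S ∈ ℝ^{N×r}` (`r < m`) be a selection
matrix, and suppose `Θ := SᵀΦ` has full row rank, with `Θ⁺ = Θᵀ(ΘΘᵀ)⁻¹`. Then the Q-DEIM
estimate `ũ(0) = ΦΘ⁺Sᵀu` satisfies `|ũ(0) - u| ≤ ‖Θ⁺‖₂ |u|`; equivalently, for `u ≠ 0` the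
relative error is at most `‖Θ⁺‖₂`. -/
theorem qdeim_error_bound {N m r : ℕ} (hr : 0 < r) (hrm : r < m) (hmN : m ≤ N)
    (Φ : Matrix (Fin N) (Fin m) ℝ) (hΦ : Φᵀ * Φ = 1)
    (S : Matrix (Fin N) (Fin r) ℝ)
    (hS : ∃ ι : Fin r → Fin N, Function.Injective ι ∧
      ∀ (k : Fin N) (j : Fin r), S k j = if k = ι j then (1 : ℝ) else 0)
    (hrank : (Sᵀ * Φ).rank = r) :
    (∀ u : Fin N → ℝ,
      eNorm (Φ.mulVec (((Sᵀ * Φ)ᵀ * ((Sᵀ * Φ) * (Sᵀ * Φ)ᵀ)⁻¹).mulVec (Sᵀ.mulVec u)) - u) ≤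
        specNorm ((Sᵀ * Φ)ᵀ * ((Sᵀ * Φ) * (Sᵀ * Φ)ᵀ)⁻¹) * eNorm u) ∧
    (∀ u : Fin N → ℝ, u ≠ 0 →
      eNorm (Φ.mulVec (((Sᵀ * Φ)ᵀ * ((Sᵀ * Φ) * (Sᵀ * Φ)ᵀ)⁻¹).mulVec (Sᵀ.mulVec u)) - u) /
        eNorm u ≤ specNorm ((Sᵀ * Φ)ᵀ * ((Sᵀ * Φ) * (Sᵀ * Φ)ᵀ)⁻¹)) := by
  obtain ⟨ι, hinj, hSdef⟩ := hS
  obtain ⟨Θ, hΘdef⟩ : ∃ M : Matrix (Fin r) (Fin m) ℝ, M = Sᵀ * Φ := ⟨_, rfl⟩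
  rw [← hΘdef] at hrank ⊢
  obtain ⟨G, hGdef⟩ : ∃ M : Matrix (Fin r) (Fin r) ℝ, M = Θ * Θᵀ := ⟨_, rfl⟩
  rw [← hGdef]
  obtain ⟨P, hPdef⟩ : ∃ M : Matrix (Fin m) (Fin r) ℝ, M = Θᵀ * G⁻¹ := ⟨_, rfl⟩
  rw [← hPdef]
  obtain ⟨c, hcdef⟩ : ∃ c' : ℝ, c' = specNorm P := ⟨_, rfl⟩
  rw [← hcdef]
  -- invertibility of the Gram matrix
  have hrkG : G.rank = r := by
    rw [hGdef, Matrix.rank_self_mul_transpose]; exact hrank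
  have hGdet : IsUnit G.det := by
    rw [isUnit_iff_ne_zero]
    intro hdet
    obtain ⟨v, hv0, hv⟩ := (Matrix.exists_mulVec_eq_zero_iff).2 hdet
    have hker : LinearMap.ker G.mulVecLin ≠ ⊥ := by
      intro h
      exact hv0 (Matrix.ker_mulVecLin_eq_bot_iff.1 h v hv)
    have hrn := LinearMap.finrank_range_add_finrank_ker G.mulVecLin
    rw [Module.finrank_fin_fun] at hrn
    have hrange : Module.finrank ℝ (LinearMap.range G.mulVecLin) = r := hrkG
    rw [hrange] at hrn
    have : Module.finrank ℝ (LinearMap.ker G.mulVecLin) = 0 := by omega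
    exact hker (Submodule.finrank_eq_zero.1 this)
  have hGinv : G * G⁻¹ = 1 := Matrix.mul_nonsing_inv _ hGdet
  have hΘP : Θ * P = 1 := by rw [hPdef, ← Matrix.mul_assoc, ← hGdef, hGinv]
  obtain ⟨Q, hQdef⟩ : ∃ M : Matrix (Fin m) (Fin m) ℝ, M = P * Θ := ⟨_, rfl⟩
  have hQP : Q * P = P := by rw [hQdef, Matrix.mul_assoc, hΘP, Matrix.mul_one]
  have hQQ : Q * Q = Q := by
    rw [hQdef, Matrix.mul_assoc, ← Matrix.mul_assoc Θ P Θ, hΘP, Matrix.one_mul]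
  have hGT : Gᵀ = G := by rw [hGdef, Matrix.transpose_mul, Matrix.transpose_transpose]
  have hPT : Pᵀ = G⁻¹ * Θ := by
    rw [hPdef, Matrix.transpose_mul, Matrix.transpose_transpose,
      Matrix.transpose_nonsing_inv, hGT]
  have hQT : Qᵀ = Q := by
    rw [hQdef, Matrix.transpose_mul, hPT, hPdef, ← Matrix.mul_assoc]
  -- selection matrix facts
  have hSvec : ∀ v : Fin N → ℝ, Sᵀ.mulVec v = fun j => v (ι j) := by
    intro v; funext j
    simp [Matrix.mulVec, Matrix.transpose_apply, dotProduct, hSdef, ite_mul]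
  have hScon : ∀ v : Fin N → ℝ, (Sᵀ.mulVec v) ⬝ᵥ (Sᵀ.mulVec v) ≤ v ⬝ᵥ v := by
    intro v
    rw [hSvec]
    simp only [dotProduct]
    calc ∑ j : Fin r, v (ι j) * v (ι j)
        = ∑ k ∈ Finset.univ.image ι, v k * v k :=
          (Finset.sum_image (f := fun k : Fin N => v k * v k) (g := ι)
            (fun a _ b _ hab => hinj hab)).symm
      _ ≤ ∑ k : Fin N, v k * v k :=
          Finset.sum_le_sum_of_subset_of_nonneg (Finset.subset_univ _)
            (fun k _ _ => mul_self_nonneg _)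
  -- isometry facts
  have hΦdot : ∀ a b : Fin m → ℝ, (Φ.mulVec a) ⬝ᵥ (Φ.mulVec b) = a ⬝ᵥ b := by
    intro a b; rw [dot_mm, hΦ, Matrix.one_mulVec]
  have hΦw : ∀ wv : Fin N → ℝ, Φᵀ.mulVec wv = 0 → ∀ a, (Φ.mulVec a) ⬝ᵥ wv = 0 := by
    intro wv hwv a
    rw [← Matrix.vecMul_transpose, ← Matrix.dotProduct_mulVec, hwv, dotProduct_zero]
  have hΘcon : ∀ zv : Fin m → ℝ, (Θ.mulVec zv) ⬝ᵥ (Θ.mulVec zv) ≤ zv ⬝ᵥ zv := by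
    intro zv
    have h1 : Θ.mulVec zv = Sᵀ.mulVec (Φ.mulVec zv) := by
      rw [hΘdef, Matrix.mulVec_mulVec]
    rw [h1]
    exact (hScon _).trans_eq (hΦdot _ _)
  -- spectral norm is at least 1
  have hc1 : (1:ℝ) ≤ c := by
    set y : Fin r → ℝ := Pi.single ⟨0, hr⟩ 1 with hy
    have hyd : y ⬝ᵥ y = 1 := by
      simp [hy, dotProduct, Pi.single_apply]
    have hyn : eNorm y = 1 := by
      rw [eNorm_eq_sqrt_dot, hyd, Real.sqrt_one]
    have hy2 : Θ.mulVec (P.mulVec y) = y := by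
      rw [Matrix.mulVec_mulVec, hΘP, Matrix.one_mulVec]
    have h3 : eNorm y ≤ eNorm (P.mulVec y) := by
      rw [eNorm_eq_sqrt_dot, eNorm_eq_sqrt_dot]
      apply Real.sqrt_le_sqrt
      calc y ⬝ᵥ y = (Θ.mulVec (P.mulVec y)) ⬝ᵥ (Θ.mulVec (P.mulVec y)) := by rw [hy2]
        _ ≤ (P.mulVec y) ⬝ᵥ (P.mulVec y) := hΘcon _
    have h4 := eNorm_mulVec_le P y
    rw [← hcdef] at h4
    rw [hyn] at h3 h4
    rw [mul_one] at h4
    exact h3.trans h4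
  have hc0 : (0:ℝ) ≤ c := le_trans zero_le_one hc1
  have hPb : ∀ v : Fin r → ℝ, (P.mulVec v) ⬝ᵥ (P.mulVec v) ≤ c^2 * (v ⬝ᵥ v) := by
    intro v
    have h := eNorm_mulVec_le P v
    rw [← hcdef] at h
    have h2 : (eNorm (P.mulVec v))^2 ≤ (c * eNorm v)^2 :=
      pow_le_pow_left₀ (eNorm_nonneg _) h 2
    rw [sq_eNorm] at h2
    calc (P.mulVec v) ⬝ᵥ (P.mulVec v) ≤ (c * eNorm v)^2 := h2
      _ = c^2 * (eNorm v)^2 := by ring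
      _ = c^2 * (v ⬝ᵥ v) := by rw [sq_eNorm]
  -- key lemma
  have hkey : ∀ wv : Fin N → ℝ, Φᵀ.mulVec wv = 0 →
      ∀ zv : Fin m → ℝ, zv = P.mulVec (Sᵀ.mulVec wv) →
      zv ⬝ᵥ zv + wv ⬝ᵥ wv ≤ c^2 * (wv ⬝ᵥ wv) := by
    intro wv hwv zv hzv
    rcases eq_or_ne zv 0 with rfl | hz0
    · have hnn := dot_self_nonneg wv
      simp only [zero_dotProduct, zero_add]
      have h1c : (1:ℝ) ≤ c^2 := by nlinarith [hc1]
      nlinarith [h1c, hnn]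
    · have hw0 : wv ≠ 0 := by
        rintro rfl
        apply hz0
        rw [hzv, Matrix.mulVec_zero, Matrix.mulVec_zero]
      have hα : 0 < zv ⬝ᵥ zv := lt_of_le_of_ne (dot_self_nonneg zv)
        (fun h => hz0 (dotProduct_self_eq_zero.1 h.symm))
      have hβ : 0 < wv ⬝ᵥ wv := lt_of_le_of_ne (dot_self_nonneg wv)
        (fun h => hw0 (dotProduct_self_eq_zero.1 h.symm))
      set t : ℝ := (zv ⬝ᵥ zv) / (wv ⬝ᵥ wv) with htdef
      have ht0 : 0 < t := div_pos hα hβ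
      have htβ : t * (wv ⬝ᵥ wv) = zv ⬝ᵥ zv := div_mul_cancel₀ _ hβ.ne'
      set u' : Fin N → ℝ := Φ.mulVec zv + t • wv with hu'
      have hQz : Q.mulVec zv = zv := by
        rw [hzv, Matrix.mulVec_mulVec, hQP]
      have hPSΦ : P.mulVec (Sᵀ.mulVec (Φ.mulVec zv)) = Q.mulVec zv := by
        rw [Matrix.mulVec_mulVec, Matrix.mulVec_mulVec, Matrix.mul_assoc, ← hΘdef, ← hQdef]
      have hPu' : P.mulVec (Sᵀ.mulVec u') = (1 + t) • zv := by
        rw [hu', Matrix.mulVec_add, Matrix.mulVec_smul, Matrix.mulVec_add, Matrix.mulVec_smul,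
          ← hzv, hPSΦ, hQz, add_smul, one_smul]
      have hcross : (Φ.mulVec zv) ⬝ᵥ wv = 0 := hΦw wv hwv zv
      have hwz : wv ⬝ᵥ (Φ.mulVec zv) = 0 := by rw [dotProduct_comm]; exact hcross
      have hu'dot : u' ⬝ᵥ u' = zv ⬝ᵥ zv + t ^ 2 * (wv ⬝ᵥ wv) := by
        simp only [hu', add_dotProduct, dotProduct_add, smul_dotProduct, dotProduct_smul,
          smul_eq_mul, hΦdot, hcross, hwz]
        ring
      have hPu'dot : ((1+t) • zv) ⬝ᵥ ((1+t) • zv) = (1+t)^2 * (zv ⬝ᵥ zv) := by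
        simp only [smul_dotProduct, dotProduct_smul, smul_eq_mul]; ring
      have hchain : (1+t)^2 * (zv ⬝ᵥ zv) ≤ c^2 * (zv ⬝ᵥ zv + t^2 * (wv ⬝ᵥ wv)) := by
        calc (1+t)^2 * (zv ⬝ᵥ zv) = ((1+t) • zv) ⬝ᵥ ((1+t) • zv) := hPu'dot.symm
          _ = (P.mulVec (Sᵀ.mulVec u')) ⬝ᵥ (P.mulVec (Sᵀ.mulVec u')) := by rw [hPu']
          _ ≤ c^2 * ((Sᵀ.mulVec u') ⬝ᵥ (Sᵀ.mulVec u')) := hPb _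
          _ ≤ c^2 * (u' ⬝ᵥ u') := mul_le_mul_of_nonneg_left (hScon u') (sq_nonneg c)
          _ = c^2 * (zv ⬝ᵥ zv + t^2 * (wv ⬝ᵥ wv)) := by rw [hu'dot]
      have e1 : zv ⬝ᵥ zv + t^2 * (wv ⬝ᵥ wv) = (1+t) * (zv ⬝ᵥ zv) := by
        have h5 : t^2 * (wv ⬝ᵥ wv) = t * (t * (wv ⬝ᵥ wv)) := by ring
        rw [h5, htβ]; ring
      rw [e1] at hchain
      have hfac : 0 < (1 + t) * (zv ⬝ᵥ zv) := mul_pos (by linarith) hα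
      have h1t : 1 + t ≤ c^2 := by
        have h2 : (1+t) * ((1+t) * (zv ⬝ᵥ zv)) ≤ c^2 * ((1+t) * (zv ⬝ᵥ zv)) := by
          calc (1+t) * ((1+t)*(zv ⬝ᵥ zv)) = (1+t)^2 * (zv ⬝ᵥ zv) := by ring
            _ ≤ c^2 * ((1+t)*(zv ⬝ᵥ zv)) := hchain
        rw [mul_comm (1+t) ((1+t) * (zv ⬝ᵥ zv)), mul_comm (c^2) ((1+t) * (zv ⬝ᵥ zv))] at h2
        exact le_of_mul_le_mul_left h2 hfac
      have e2 : zv ⬝ᵥ zv + wv ⬝ᵥ wv = (1 + t) * (wv ⬝ᵥ wv) := by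
        rw [← htβ]; ring
      rw [e2]
      exact mul_le_mul_of_nonneg_right h1t hβ.le
  -- the main pointwise bound
  have main : ∀ u : Fin N → ℝ,
      eNorm (Φ.mulVec (P.mulVec (Sᵀ.mulVec u)) - u) ≤ c * eNorm u := by
    intro u
    obtain ⟨x, hx⟩ : ∃ x' : Fin m → ℝ, x' = Φᵀ.mulVec u := ⟨_, rfl⟩
    obtain ⟨w, hwdef⟩ : ∃ w' : Fin N → ℝ, w' = u - Φ.mulVec x := ⟨_, rfl⟩
    have hu : u = Φ.mulVec x + w := by rw [hwdef]; abel
    have hΦTw : Φᵀ.mulVec w = 0 := by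
      rw [hwdef, Matrix.mulVec_sub, ← hx, hx, Matrix.mulVec_mulVec, hΦ, Matrix.one_mulVec, ← hx, sub_self]
    obtain ⟨z, hz⟩ : ∃ z' : Fin m → ℝ, z' = P.mulVec (Sᵀ.mulVec w) := ⟨_, rfl⟩
    obtain ⟨a, ha⟩ : ∃ a' : Fin m → ℝ, a' = Q.mulVec x - x := ⟨_, rfl⟩
    have hPSΦ : ∀ v : Fin m → ℝ, P.mulVec (Sᵀ.mulVec (Φ.mulVec v)) = Q.mulVec v := by
      intro v
      rw [Matrix.mulVec_mulVec, Matrix.mulVec_mulVec, Matrix.mul_assoc, ← hΘdef, ← hQdef]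
    have hPu : P.mulVec (Sᵀ.mulVec u) = Q.mulVec x + z := by
      conv_lhs => rw [hu]
      rw [Matrix.mulVec_add, Matrix.mulVec_add, hPSΦ, ← hz]
    have herr : Φ.mulVec (P.mulVec (Sᵀ.mulVec u)) - u = Φ.mulVec (a + z) - w := by
      rw [hPu, ha]
      conv_lhs => rw [hu]
      simp only [Matrix.mulVec_add, Matrix.mulVec_sub]
      abel
    have hz2 : Q.mulVec z = z := by rw [hz, Matrix.mulVec_mulVec, hQP]
    have haz : a ⬝ᵥ z = 0 := by
      have ha2 : a = (Q - 1).mulVec x := by rw [ha, Matrix.sub_mulVec, Matrix.one_mulVec]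
      calc a ⬝ᵥ z = ((Q - 1).mulVec x) ⬝ᵥ (Q.mulVec z) := by rw [← ha2, hz2]
        _ = x ⬝ᵥ (((Q - 1)ᵀ * Q).mulVec z) := dot_mm _ _ _ _
        _ = 0 := by
            have h0 : (Q - 1)ᵀ * Q = 0 := by
              rw [Matrix.transpose_sub, Matrix.transpose_one, hQT, Matrix.sub_mul, hQQ,
                Matrix.one_mul, sub_self]
            rw [h0, Matrix.zero_mulVec, dotProduct_zero]
    have h1 : (Q.mulVec x) ⬝ᵥ (Q.mulVec x) = x ⬝ᵥ (Q.mulVec x) := by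
      rw [dot_mm, hQT, hQQ]
    have h2 : 0 ≤ x ⬝ᵥ (Q.mulVec x) := h1 ▸ dot_self_nonneg _
    have haa : a ⬝ᵥ a ≤ x ⬝ᵥ x := by
      have h3 : a ⬝ᵥ a = x ⬝ᵥ x - x ⬝ᵥ (Q.mulVec x) := by
        simp only [ha, sub_dotProduct, dotProduct_sub]
        rw [h1, dotProduct_comm (Q.mulVec x) x]
        ring
      linarith
    have hcross2 : ∀ g : Fin m → ℝ, (Φ.mulVec g) ⬝ᵥ w = 0 := hΦw w hΦTw
    have hwΦ : ∀ g : Fin m → ℝ, w ⬝ᵥ (Φ.mulVec g) = 0 := fun g => by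
      rw [dotProduct_comm]; exact hcross2 g
    have hudot : u ⬝ᵥ u = x ⬝ᵥ x + w ⬝ᵥ w := by
      conv_lhs => rw [hu]
      simp only [add_dotProduct, dotProduct_add, hΦdot, hcross2, hwΦ]
      ring
    have hedot : (Φ.mulVec (a + z) - w) ⬝ᵥ (Φ.mulVec (a + z) - w)
        = (a ⬝ᵥ a) + (z ⬝ᵥ z) + w ⬝ᵥ w := by
      simp only [sub_dotProduct, dotProduct_sub, hΦdot, hcross2, hwΦ, add_dotProduct,
        dotProduct_add, haz, dotProduct_comm z a]
      ring
    have hkw := hkey w hΦTw z hz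
    have hfinal : (Φ.mulVec (a + z) - w) ⬝ᵥ (Φ.mulVec (a + z) - w) ≤ c^2 * (u ⬝ᵥ u) := by
      rw [hedot, hudot]
      have h1c : (1:ℝ) ≤ c^2 := by nlinarith [hc1]
      have hcx : x ⬝ᵥ x ≤ c^2 * (x ⬝ᵥ x) := by nlinarith [h1c, dot_self_nonneg x]
      linarith [haa, hkw, hcx]
    rw [herr, eNorm_eq_sqrt_dot, eNorm_eq_sqrt_dot]
    calc Real.sqrt ((Φ.mulVec (a + z) - w) ⬝ᵥ (Φ.mulVec (a + z) - w))
        ≤ Real.sqrt (c^2 * (u ⬝ᵥ u)) := Real.sqrt_le_sqrt hfinal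
      _ = c * Real.sqrt (u ⬝ᵥ u) := by
          rw [Real.sqrt_mul (sq_nonneg c), Real.sqrt_sq hc0]
  constructor
  · exact main
  · intro u hu0
    rw [div_le_iff₀ (eNorm_pos hu0)]
    exact main u
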